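/- The decomposition Γ(TN|_Σ) = Γ_μ(TN|_Σ) ⊕ Γ_μ(TN|_Σ)^⊥ is orthogonal with respect to the weak L² inner product (X,Y) ↦ ∫_Σ g(X,Y) μ^Σ: for every X_μ with div_Σ(X_μ^⊤) = g(X_μ^⊥, Tr Π_Σ) and every smooth p : Σ → ℝ, one has ∫_Σ g(X_μ, grad(p) + p·Tr Π_Σ) μ^Σ = 0. -/

import Mathlib

/-- Abstract setting for the space `Γ(TN|_Σ)` of smooth sections of the ambient
tangent bundle `TN` restricted to a compact, connected, oriented submanifold `Σ`
(whose points form the type `B`) of a Riemannian manifold `(N,g)`.  The type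
`Sec` stands for `Γ(TN|_Σ)`, a module over the smooth functions `B → ℝ`.
The fields record: the tangential projection `X ↦ X^⊤`, the pointwise metric
pairing `g(X,Y)`, the divergence `div_Σ` on `Σ` (with respect to the induced
Riemannian volume form `μ^Σ`), the gradient with respect to the induced metric,
the mean curvature vector `H = Tr Π_Σ` (a normal section), integration against
`μ^Σ`, together with their standard properties (Leibniz rule, Stokes' theorem
on the closed manifold `Σ`, and bijectivity of the elliptic operator
`Δ - c` for smooth `c ≥ 0`, `c ≢ 0`). -/
structure HodgeSetup (B : Type*) (Sec : Type*) [AddCommGroup Sec]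
    [Module (B → ℝ) Sec] where
  /-- the tangential projection `X ↦ X^⊤` onto `TΣ` -/
  tang : Sec → Sec
  tang_add : ∀ X Y, tang (X + Y) = tang X + tang Y
  tang_smul : ∀ (p : B → ℝ) (X : Sec), tang (p • X) = p • tang X
  tang_idem : ∀ X, tang (tang X) = tang X
  /-- the pointwise metric pairing `g(X,Y) : B → ℝ` -/
  gpair : Sec → Sec → (B → ℝ)
  gpair_symm : ∀ X Y, gpair X Y = gpair Y X
  gpair_add_left : ∀ X Y Z, gpair (X + Y) Z = gpair X Z + gpair Y Z
  gpair_smul_left : ∀ (p : B → ℝ) (X Y : Sec), gpair (p • X) Y = p * gpair X Y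
  gpair_self_nonneg : ∀ (X : Sec) (x : B), 0 ≤ gpair X X x
  gpair_self_eq_zero : ∀ X, gpair X X = 0 → X = 0
  /-- tangential and normal parts are pointwise orthogonal -/
  gpair_tang_perp : ∀ X Y, gpair (tang X) (Y - tang Y) = 0
  /-- the gradient `grad p` of a function on `Σ`, w.r.t. the induced metric -/
  grad : (B → ℝ) → Sec
  grad_tangent : ∀ p, tang (grad p) = grad p
  /-- the divergence `div_Σ` (of tangential fields) w.r.t. `μ^Σ` -/
  div : Sec → (B → ℝ)
  div_add : ∀ X Y, div (X + Y) = div X + div Y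
  /-- Leibniz rule for the divergence of `p • X`, `X` tangential -/
  div_smul : ∀ (p : B → ℝ) (X : Sec), tang X = X →
    div (p • X) = p * div X + gpair (grad p) X
  /-- the mean curvature vector `H = Tr Π_Σ` -/
  H : Sec
  /-- `Tr Π_Σ` is a normal section -/
  H_normal : tang H = 0
  /-- integration of functions against the Riemannian volume form `μ^Σ` -/
  integral : (B → ℝ) → ℝ
  integral_add : ∀ p q, integral (p + q) = integral p + integral q
  /-- Stokes' theorem on the closed manifold `Σ`: the integral of the
  divergence of a tangential field vanishes -/
  integral_div : ∀ X, tang X = X → integral (div X) = 0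
  /-- the elliptic operator `Δ - c = div ∘ grad - c` of index zero is bijective
  on smooth functions for `c ≥ 0`, `c ≢ 0` (maximum principle) -/
  elliptic_bijective : ∀ c : B → ℝ, (∀ x, 0 ≤ c x) → c ≠ 0 →
    Function.Bijective (fun p : B → ℝ => div (grad p) - c * p)

namespace HodgeSetup

variable {B : Type*} {Sec : Type*} [AddCommGroup Sec] [Module (B → ℝ) Sec]

/-- the normal part `X^⊥ = X - X^⊤` of a section. -/
def perp (hs : HodgeSetup B Sec) (X : Sec) : Sec := X - hs.tang X

/-- membership in `Γ_μ(TN|_Σ) = {X : div_Σ(X^⊤) - g(X^⊥, Tr Π_Σ) = 0}`. -/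
def MuSection (hs : HodgeSetup B Sec) (X : Sec) : Prop :=
  hs.div (hs.tang X) = hs.gpair (hs.perp X) hs.H

/-- the Laplace–Beltrami operator `Δ = div ∘ grad` of the induced metric. -/
def laplacian (hs : HodgeSetup B Sec) (p : B → ℝ) : B → ℝ := hs.div (hs.grad p)

end HodgeSetup


/-! For `X ∈ Γ_μ`, the Leibniz rule turns the integrand `g(X, grad p + p H)` into
`div_Σ(p X^⊤)`: the gradient only sees `X^⊤`, the normal field `H` only sees `X^⊥`, and
`div_Σ X^⊤ = g(X^⊥, H)`. Stokes' theorem then makes its integral vanish. -/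

namespace HodgeSetup

variable {B : Type*} {Sec : Type*} [AddCommGroup Sec] [Module (B → ℝ) Sec]
  (hs : HodgeSetup B Sec)

theorem gpair_add_right (X Y Z : Sec) :
    hs.gpair X (Y + Z) = hs.gpair X Y + hs.gpair X Z := by
  rw [hs.gpair_symm, hs.gpair_add_left, hs.gpair_symm Y, hs.gpair_symm Z]

theorem gpair_smul_right (q : B → ℝ) (X Y : Sec) :
    hs.gpair X (q • Y) = q * hs.gpair X Y := by
  rw [hs.gpair_symm, hs.gpair_smul_left, hs.gpair_symm]

theorem tang_add_perp (X : Sec) : hs.tang X + hs.perp X = X :=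
  add_sub_cancel _ _

theorem gpair_perp_of_tangent {Y : Sec} (hY : hs.tang Y = Y) (X : Sec) :
    hs.gpair Y (hs.perp X) = 0 := by
  simpa only [hY, perp] using hs.gpair_tang_perp Y X

theorem gpair_tang_of_normal {Y : Sec} (hY : hs.tang Y = 0) (X : Sec) :
    hs.gpair (hs.tang X) Y = 0 := by
  simpa only [hY, sub_zero] using hs.gpair_tang_perp X Y

theorem gpair_eq_gpair_tang_of_tangent {Y : Sec} (hY : hs.tang Y = Y) (X : Sec) :
    hs.gpair X Y = hs.gpair (hs.tang X) Y := by
  conv_lhs => rw [← hs.tang_add_perp X]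
  rw [hs.gpair_add_left, hs.gpair_symm (hs.perp X), hs.gpair_perp_of_tangent hY, add_zero]

theorem gpair_eq_gpair_perp_of_normal {Y : Sec} (hY : hs.tang Y = 0) (X : Sec) :
    hs.gpair X Y = hs.gpair (hs.perp X) Y := by
  conv_lhs => rw [← hs.tang_add_perp X]
  rw [hs.gpair_add_left, hs.gpair_tang_of_normal hY, zero_add]

theorem MuSection.gpair_grad_add_smul_H {X : Sec} (hX : hs.MuSection X) (p : B → ℝ) :
    hs.gpair X (hs.grad p + p • hs.H) = hs.div (p • hs.tang X) := by
  rw [hs.div_smul p _ (hs.tang_idem X), hX, hs.gpair_add_right, hs.gpair_smul_right,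
    hs.gpair_eq_gpair_tang_of_tangent (hs.grad_tangent p),
    hs.gpair_eq_gpair_perp_of_normal hs.H_normal, hs.gpair_symm (hs.grad p)]
  ring

theorem integral_div_smul_tang (p : B → ℝ) (X : Sec) :
    hs.integral (hs.div (p • hs.tang X)) = 0 :=
  hs.integral_div _ (by rw [hs.tang_smul, hs.tang_idem])

end HodgeSetup

/-- The decomposition
`Γ(TN|_Σ) = Γ_μ(TN|_Σ) ⊕ Γ_μ(TN|_Σ)^⊥` is orthogonal with respect to the weak
`L²` inner product `(X,Y) ↦ ∫_Σ g(X,Y) μ^Σ`: for every `X_μ` with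
`div_Σ(X_μ^⊤) = g(X_μ^⊥, Tr Π_Σ)` and every smooth `p : Σ → ℝ`,
`∫_Σ g(X_μ, grad p + p · Tr Π_Σ) μ^Σ = 0`. -/
theorem helmholtz_hodge_orthogonal
    {B : Type*} {Sec : Type*} [AddCommGroup Sec] [Module (B → ℝ) Sec]
    (hs : HodgeSetup B Sec) (Xμ : Sec) (p : B → ℝ) (h : hs.MuSection Xμ) :
    hs.integral (hs.gpair Xμ (hs.grad p + p • hs.H)) = 0 := by
  rw [h.gpair_grad_add_smul_H hs p]
  exact hs.integral_div_smul_tang p Xμ
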